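/- Let (p_1,...,p_7; ρ_1,...,ρ_7) be the uniform ensemble of qubit states where ρ_x = |1⟩⟨1| for x ∈ {1,2,3} and ρ_x = (1/2)(|1⟩+|2⟩)(⟨1|+⟨2|) for x ∈ {4,5,6,7}. Then the infimum over density operators τ of D_H^{1−1/7}(π_X ⊗ τ ∥ ρ̄_{XA}) is +∞, while −ln P_err is finite; hence in the characterization of P_err via the hypothesis-testing divergence the infimum must be taken over all unit-trace Hermitian operators rather than over states. -/

import Mathlib

open scoped Kronecker
open Matrix Filter Topology
open scoped ComplexOrder
attribute [local instance] Classical.propDecidable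

namespace QHE

/-- Functional calculus for Hermitian matrices (junk value `0` on non-Hermitian input). -/
noncomputable def mfun {n : Type*} [Fintype n] [DecidableEq n] (f : ℝ → ℝ)
    (A : Matrix n n ℂ) : Matrix n n ℂ :=
  if hA : A.IsHermitian then
    (hA.eigenvectorUnitary : Matrix n n ℂ) *
      Matrix.diagonal (fun i => (f (hA.eigenvalues i) : ℂ)) *
      (star (hA.eigenvectorUnitary : Matrix n n ℂ))
  else 0

/-- Real power of a Hermitian matrix, taken on its support (`0 ^ r = 0`). -/
noncomputable def mpow {n : Type*} [Fintype n] [DecidableEq n] (A : Matrix n n ℂ) (r : ℝ) :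
    Matrix n n ℂ :=
  mfun (fun x => if x = 0 then 0 else Real.rpow x r) A

/-- Logarithm of a Hermitian matrix, taken on its support. -/
noncomputable def mlog {n : Type*} [Fintype n] [DecidableEq n] (A : Matrix n n ℂ) :
    Matrix n n ℂ :=
  mfun (fun x => if x = 0 then 0 else Real.log x) A

/-- `‖X‖_α ^ α = Tr[(Xᴴ X)^(α/2)]`, the α-th power of the Schatten α-norm. -/
noncomputable def schattenPow {n : Type*} [Fintype n] [DecidableEq n] (α : ℝ)
    (X : Matrix n n ℂ) : ℝ :=
  ((mpow (Xᴴ * X) (α / 2)).trace).re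

/-- Support inclusion `supp γ ⊆ supp σ`, phrased as kernel inclusion `ker σ ⊆ ker γ`. -/
noncomputable def suppLE {n : Type*} [Fintype n] (γ σ : Matrix n n ℂ) : Prop :=
  ∀ v : n → ℂ, σ.mulVec v = 0 → γ.mulVec v = 0

/-- Extended sandwiched Rényi quasi-divergence
`Q̃_α(γ∥σ) = ‖σ^((1-α)/(2α)) γ σ^((1-α)/(2α))‖_α^α`. -/
noncomputable def sandQ {n : Type*} [Fintype n] [DecidableEq n] (α : ℝ)
    (γ σ : Matrix n n ℂ) : ℝ :=
  schattenPow α (mpow σ ((1 - α) / (2 * α)) * γ * mpow σ ((1 - α) / (2 * α)))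

/-- Extended sandwiched Rényi divergence (real-valued formula, meaningful when
`supp γ ⊆ supp σ`). -/
noncomputable def sandDR {n : Type*} [Fintype n] [DecidableEq n] (α : ℝ)
    (γ σ : Matrix n n ℂ) : ℝ :=
  (1 / (α - 1)) * Real.log (sandQ α γ σ)

/-- Extended sandwiched Rényi divergence, `+∞` when the support condition fails. -/
noncomputable def sandD {n : Type*} [Fintype n] [DecidableEq n] (α : ℝ)
    (γ σ : Matrix n n ℂ) : EReal :=
  if suppLE γ σ then ((sandDR α γ σ : ℝ) : EReal) else ⊤

/-- Trace norm `‖X‖₁`. -/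
noncomputable def traceNorm {n : Type*} [Fintype n] [DecidableEq n] (X : Matrix n n ℂ) : ℝ :=
  schattenPow 1 X

/-- Absolute value `|X| = (Xᴴ X)^(1/2)`. -/
noncomputable def matAbs {n : Type*} [Fintype n] [DecidableEq n] (X : Matrix n n ℂ) :
    Matrix n n ℂ :=
  mpow (Xᴴ * X) (1 / 2 : ℝ)

/-- Umegaki relative entropy `Tr[ρ(ln ρ − ln σ)]` (real-valued formula). -/
noncomputable def umegakiR {n : Type*} [Fintype n] [DecidableEq n] (ρ σ : Matrix n n ℂ) : ℝ :=
  ((ρ * (mlog ρ - mlog σ)).trace).re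

/-- Umegaki relative entropy, `+∞` when the support condition fails. -/
noncomputable def umegaki {n : Type*} [Fintype n] [DecidableEq n] (ρ σ : Matrix n n ℂ) : EReal :=
  if suppLE ρ σ then ((umegakiR ρ σ : ℝ) : EReal) else ⊤

/-- Density operator: positive semidefinite with unit trace. -/
noncomputable def IsState {n : Type*} [Fintype n] (ρ : Matrix n n ℂ) : Prop :=
  ρ.PosSemidef ∧ ρ.trace = 1

/-- Unit-trace Hermitian operator. -/
def UnitTraceHerm {n : Type*} [Fintype n] (τ : Matrix n n ℂ) : Prop :=
  τ.IsHermitian ∧ τ.trace = 1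

/-- `−ln x`, valued `+∞` for `x ≤ 0`. -/
noncomputable def negLogE (x : ℝ) : EReal :=
  if x ≤ 0 then ⊤ else ((-Real.log x : ℝ) : EReal)

/-- Extended hypothesis-testing divergence
`D_H^ε(τ∥σ) = sup{−ln Tr[Λσ] : 0 ≤ Λ ≤ I, Tr[Λτ] ≥ 1−ε}`. -/
noncomputable def DH {n : Type*} [Fintype n] [DecidableEq n] (ε : ℝ)
    (τ σ : Matrix n n ℂ) : EReal :=
  ⨆ Λ ∈ {Λ : Matrix n n ℂ |
      Λ.PosSemidef ∧ (1 - Λ).PosSemidef ∧ 1 - ε ≤ ((Λ * τ).trace).re},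
    negLogE (((Λ * σ).trace).re)

/-- Optimal error probability of state exclusion for the ensemble `(p, ρ)`. -/
noncomputable def Perr {n ι : Type*} [Fintype n] [DecidableEq n] [Fintype ι]
    (p : ι → ℝ) (ρ : ι → Matrix n n ℂ) : ℝ :=
  sInf {e : ℝ | ∃ Λ : ι → Matrix n n ℂ, (∀ x, (Λ x).PosSemidef) ∧ (∑ x, Λ x = 1) ∧
    e = ∑ x, p x * (((Λ x) * (ρ x)).trace).re}

/-- Optimal success probability of state discrimination for the ensemble `(p, ρ)`. -/
noncomputable def Psucc {n ι : Type*} [Fintype n] [DecidableEq n] [Fintype ι]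
    (p : ι → ℝ) (ρ : ι → Matrix n n ℂ) : ℝ :=
  sSup {e : ℝ | ∃ Λ : ι → Matrix n n ℂ, (∀ x, (Λ x).PosSemidef) ∧ (∑ x, Λ x = 1) ∧
    e = ∑ x, p x * (((Λ x) * (ρ x)).trace).re}

/-- The probability simplex over a finite index type. -/
def probSimplex (ι : Type*) [Fintype ι] : Set (ι → ℝ) :=
  {s | (∀ x, 0 ≤ s x) ∧ ∑ x, s x = 1}

/-- CPTP maps, characterized by Kraus representations. -/
def IsCPTP {n m : Type*} [Fintype n] [DecidableEq n] [Fintype m] [DecidableEq m]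
    (Φ : Matrix n n ℂ → Matrix m m ℂ) : Prop :=
  ∃ (k : ℕ) (K : Fin k → Matrix m n ℂ), (∑ i, (K i)ᴴ * K i = 1) ∧
    ∀ A, Φ A = ∑ i, K i * A * (K i)ᴴ

/-- Completely positive maps, characterized by Kraus representations. -/
def IsCPMap {n m : Type*} [Fintype n] [DecidableEq n] [Fintype m] [DecidableEq m]
    (Φ : Matrix n n ℂ → Matrix m m ℂ) : Prop :=
  ∃ (k : ℕ) (K : Fin k → Matrix m n ℂ), ∀ A, Φ A = ∑ i, K i * A * (K i)ᴴ

/-- Extension `id_{C^d} ⊗ Φ` of a (linear) map `Φ` to a `d`-dimensional reference system. -/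
noncomputable def matExt {n m : Type*} (Φ : Matrix n n ℂ → Matrix m m ℂ) (d : ℕ)
    (X : Matrix (Fin d × n) (Fin d × n) ℂ) : Matrix (Fin d × m) (Fin d × m) ℂ :=
  Matrix.of fun p q => Φ (Matrix.of fun a b => X (p.1, a) (q.1, b)) p.2 q.2

/-- Partial trace over the first tensor factor. -/
noncomputable def ptraceFst {a b : Type*} [Fintype a] (X : Matrix (a × b) (a × b) ℂ) : Matrix b b ℂ :=
  Matrix.of fun i j => ∑ k : a, X (k, i) (k, j)

/-- `k`-fold tensor power `A^{⊗k}` of a matrix. -/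
noncomputable def tensPow {n : Type*} [Fintype n] (A : Matrix n n ℂ) (k : ℕ) :
    Matrix (Fin k → n) (Fin k → n) ℂ :=
  Matrix.of fun f g => ∏ i, A (f i) (g i)

/-- Max-divergence `D_max(ρ∥σ) = inf{ln λ : λ ≥ 0, ρ ≤ λσ}` (`+∞` if infeasible). -/
noncomputable def Dmax {n : Type*} [Fintype n] [DecidableEq n] (ρ σ : Matrix n n ℂ) : EReal :=
  ⨅ l ∈ {l : ℝ | 0 ≤ l ∧ (l • σ - ρ).PosSemidef}, ((Real.log l : ℝ) : EReal)

/-- Channel divergence induced by a family of state divergences `D`: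
supremum over reference dimensions and bipartite input states. -/
noncomputable def Dch
    (D : (k : Type) → [Fintype k] → [DecidableEq k] → Matrix k k ℂ → Matrix k k ℂ → EReal)
    {n m : Type} [Fintype n] [DecidableEq n] [Fintype m] [DecidableEq m]
    (N M : Matrix n n ℂ → Matrix m m ℂ) : EReal :=
  ⨆ (d : ℕ), ⨆ ρ ∈ {ρ : Matrix (Fin d × n) (Fin d × n) ℂ | IsState ρ},
    D (Fin d × m) (matExt N d ρ) (matExt M d ρ)


/-- The seven qubit states of Example "affine": three copies of `|1⟩⟨1|` and
four copies of `(1/2)(|1⟩+|2⟩)(⟨1|+⟨2|)`. -/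
noncomputable def qubitEx : Fin 7 → Matrix (Fin 2) (Fin 2) ℂ := fun x =>
  if (x : ℕ) < 3 then Matrix.single 0 0 1 else Matrix.of fun _ _ => (1 / 2 : ℂ)

lemma cnonneg (r : ℝ) (h : 0 ≤ r) : (0:ℂ) ≤ (r:ℂ) := Complex.zero_le_real.mpr h

lemma psd_rank1 (c : ℝ) (hc : 0 ≤ c) (w : Fin 2 → ℂ) (M : Matrix (Fin 2) (Fin 2) ℂ)
    (hM : ∀ a b, M a b = (c:ℂ) * (w a * star (w b))) : M.PosSemidef := by
  rw [Matrix.posSemidef_iff_dotProduct_mulVec]; constructor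
  · ext a b
    simp only [conjTranspose_apply, hM, star_mul', star_star, Complex.star_def,
      Complex.conj_conj, Complex.conj_ofReal]
    ring
  · intro v
    have e : star v ⬝ᵥ (M *ᵥ v) = (c:ℂ) * (star (star (w 0) * v 0 + star (w 1) * v 1)
        * (star (w 0) * v 0 + star (w 1) * v 1)) := by
      simp [dotProduct, mulVec, Fin.sum_univ_two, hM, star_add, star_mul']
      ring
    rw [e]
    exact mul_nonneg (cnonneg c hc) (star_mul_self_nonneg _)

noncomputable def bd (q : Fin 7 → Matrix (Fin 2) (Fin 2) ℂ) :
    Matrix (Fin 7 × Fin 2) (Fin 7 × Fin 2) ℂ :=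
  Matrix.of fun p r => if p.1 = r.1 then q p.1 p.2 r.2 else 0

lemma bd_mul (q q' : Fin 7 → Matrix (Fin 2) (Fin 2) ℂ) :
    bd q * bd q' = bd (fun x => q x * q' x) := by
  ext ⟨x,a⟩ ⟨y,b⟩
  simp only [bd, Matrix.mul_apply, Matrix.of_apply, Fintype.sum_prod_type]
  rw [Finset.sum_eq_single x]
  · by_cases h : x = y <;> simp [h, Matrix.mul_apply]
  · intro z _ hz; simp [Ne.symm hz]
  · simp

lemma bd_sub (q q' : Fin 7 → Matrix (Fin 2) (Fin 2) ℂ) :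
    bd q - bd q' = bd (fun x => q x - q' x) := by
  ext ⟨x,a⟩ ⟨y,b⟩; by_cases h : x = y <;> simp [bd, h]

lemma bd_one : (1 : Matrix (Fin 7 × Fin 2) (Fin 7 × Fin 2) ℂ) = bd (fun _ => 1) := by
  ext ⟨x,a⟩ ⟨y,b⟩
  by_cases h : x = y
  · subst h; by_cases h2 : a = b <;> simp [bd, one_apply, h2, Prod.ext_iff]
  · simp [bd, one_apply, h, Prod.ext_iff]

lemma bd_trace (q : Fin 7 → Matrix (Fin 2) (Fin 2) ℂ) :
    (bd q).trace = ∑ x, (q x).trace := by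
  simp [Matrix.trace, Matrix.diag, bd, Fintype.sum_prod_type]

lemma bd_psd (q : Fin 7 → Matrix (Fin 2) (Fin 2) ℂ) (h : ∀ x, (q x).PosSemidef) :
    (bd q).PosSemidef := by
  rw [Matrix.posSemidef_iff_dotProduct_mulVec]; constructor
  · ext ⟨x,a⟩ ⟨y,b⟩
    by_cases hxy : x = y
    · subst hxy; simpa [bd, conjTranspose_apply] using congrFun (congrFun (h x).1 a) b
    · simp [bd, conjTranspose_apply, hxy, Ne.symm hxy]
  · intro v
    have e : star v ⬝ᵥ (bd q *ᵥ v)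
        = ∑ x : Fin 7, star (fun a => v (x,a)) ⬝ᵥ (q x *ᵥ fun a => v (x,a)) := by
      simp only [dotProduct, mulVec, Fintype.sum_prod_type, bd, Matrix.of_apply, Pi.star_apply]
      refine Finset.sum_congr rfl fun x _ => Finset.sum_congr rfl fun a _ => ?_
      congr 1
      rw [Finset.sum_eq_single x]
      · simp [dotProduct]
      · intro z _ hz; simp [Ne.symm hz]
      · simp
    rw [e]
    exact Finset.sum_nonneg fun x _ => (h x).dotProduct_mulVec_nonneg _

lemma sigma_eq_bd : (∑ x, Matrix.single x x ((1 / 7 : ℂ)) ⊗ₖ qubitEx x)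
    = bd (fun x => (1/7 : ℂ) • qubitEx x) := by
  ext ⟨y,a⟩ ⟨z,b⟩
  simp only [Finset.sum_apply, kroneckerMap_apply, Matrix.sum_apply, bd, Matrix.of_apply,
    Matrix.single, Matrix.smul_apply, smul_eq_mul]
  rw [Finset.sum_eq_single y]
  · by_cases h : y = z <;> simp [h, Matrix.of_apply]
  · intro x _ hx; simp [hx]
  · simp

lemma pi_eq_bd (τ : Matrix (Fin 2) (Fin 2) ℂ) :
    ((((7 : ℂ))⁻¹ • (1 : Matrix (Fin 7) (Fin 7) ℂ)) ⊗ₖ τ) = bd (fun _ => (7:ℂ)⁻¹ • τ) := by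
  ext ⟨y,a⟩ ⟨z,b⟩
  by_cases h : y = z <;> simp [bd, one_apply, h]

noncomputable def Qs : Fin 7 → Matrix (Fin 2) (Fin 2) ℂ :=
  fun x => if (x:ℕ) < 3 then !![0,0;0,1] else !![1/2,-1/2;-1/2,1/2]

lemma Qs_psd (x : Fin 7) : (Qs x).PosSemidef := by
  by_cases h : (x:ℕ) < 3
  · refine psd_rank1 1 zero_le_one ![0,1] _ fun a b => ?_
    fin_cases a <;> fin_cases b <;> simp [Qs, h]
  · refine psd_rank1 (1/2) (by norm_num) ![1,-1] _ fun a b => ?_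
    fin_cases a <;> fin_cases b <;> simp [Qs, h] <;> norm_num

lemma Qs_compl_psd (x : Fin 7) : ((1 : Matrix (Fin 2) (Fin 2) ℂ) - Qs x).PosSemidef := by
  by_cases h : (x:ℕ) < 3
  · refine psd_rank1 1 zero_le_one ![1,0] _ fun a b => ?_
    fin_cases a <;> fin_cases b <;> simp [Qs, h, one_apply] <;> norm_num
  · refine psd_rank1 (1/2) (by norm_num) ![1,1] _ fun a b => ?_
    fin_cases a <;> fin_cases b <;> simp [Qs, h, one_apply] <;> norm_num

lemma trace_zero : ((bd Qs) * (∑ x, Matrix.single x x ((1 / 7 : ℂ)) ⊗ₖ qubitEx x)).trace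
    = 0 := by
  rw [sigma_eq_bd, bd_mul, bd_trace]
  refine Finset.sum_eq_zero fun x _ => ?_
  rw [Matrix.mul_smul, trace_smul]
  convert smul_zero ((1/7:ℂ)) using 2
  by_cases h : (x:ℕ) < 3 <;>
    simp [Qs, qubitEx, h, Matrix.trace_fin_two, Matrix.mul_apply, Fin.sum_univ_two,
      Matrix.single, Matrix.of_apply, Matrix.vecHead, Matrix.vecTail, Function.comp] <;> norm_num


lemma form_re (M : Matrix (Fin 2) (Fin 2) ℂ) (h : M.PosSemidef) (v0 v1 : ℝ) :
    0 ≤ v0*v0*(M 0 0).re + v0*v1*(M 0 1).re + v1*v0*(M 1 0).re + v1*v1*(M 1 1).re := by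
  have h2 := h.dotProduct_mulVec_nonneg ![(v0:ℂ), (v1:ℂ)]
  have e : star (![(v0:ℂ),(v1:ℂ)]) ⬝ᵥ (M *ᵥ ![(v0:ℂ),(v1:ℂ)])
      = ((v0*v0 : ℝ):ℂ) * M 0 0 + ((v0*v1 : ℝ):ℂ) * M 0 1
        + ((v1*v0 : ℝ):ℂ) * M 1 0 + ((v1*v1 : ℝ):ℂ) * M 1 1 := by
    simp [dotProduct, mulVec, Fin.sum_univ_two, Pi.star_apply, Complex.star_def,
      Complex.conj_ofReal]
    push_cast
    ring
  rw [e] at h2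
  have h3 := (Complex.le_def.mp h2).1
  simpa [Complex.add_re, Complex.re_ofReal_mul] using h3

lemma overlap (τ : Matrix (Fin 2) (Fin 2) ℂ) (hpsd : τ.PosSemidef) (htr : τ.trace = 1) :
    (1:ℝ)/7 ≤ (((bd Qs) * ((((7 : ℂ))⁻¹ • (1 : Matrix (Fin 7) (Fin 7) ℂ)) ⊗ₖ τ)).trace).re := by
  rw [pi_eq_bd, bd_mul, bd_trace]
  have hf : ∀ x : Fin 7, (Qs x * ((7:ℂ)⁻¹ • τ)).trace
      = if (x:ℕ) < 3 then (7:ℂ)⁻¹ * τ 1 1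
        else (7:ℂ)⁻¹ * ((1/2) * (τ 0 0 - τ 0 1 - τ 1 0 + τ 1 1)) := by
    intro x
    by_cases h : (x:ℕ) < 3 <;>
      simp [Qs, h, Matrix.trace_fin_two, Matrix.mul_apply, Fin.sum_univ_two, Matrix.smul_apply,
        smul_eq_mul, Matrix.vecHead, Matrix.vecTail, Function.comp, Matrix.vecMul, dotProduct] <;> ring
  have key : (∑ x : Fin 7, (Qs x * ((7:ℂ)⁻¹ • τ)).trace)
      = (((1:ℝ)/7 : ℝ):ℂ) * (((2:ℝ):ℂ) * τ 0 0 - ((2:ℝ):ℂ) * τ 0 1 - ((2:ℝ):ℂ) * τ 1 0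
          + ((5:ℝ):ℂ) * τ 1 1) := by
    simp only [hf]
    rw [Fin.sum_univ_seven]
    norm_num [show ((0:Fin 7):ℕ) = 0 from rfl, show ((1:Fin 7):ℕ) = 1 from rfl,
      show ((2:Fin 7):ℕ) = 2 from rfl, show ((3:Fin 7):ℕ) = 3 from rfl,
      show ((4:Fin 7):ℕ) = 4 from rfl, show ((5:Fin 7):ℕ) = 5 from rfl,
      show ((6:Fin 7):ℕ) = 6 from rfl]
    ring
  rw [key]
  have h1 := form_re τ hpsd 1 (-2)
  have h2 : (τ 0 0).re + (τ 1 1).re = 1 := by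
    have := congrArg Complex.re htr
    simpa [Matrix.trace_fin_two, Complex.add_re] using this
  simp only [Complex.re_ofReal_mul, Complex.add_re, Complex.sub_re]
  linarith


lemma trA (M : Matrix (Fin 2) (Fin 2) ℂ) :
    (M * Matrix.single 0 0 1).trace = M 0 0 := by
  simp [Matrix.trace_fin_two, Matrix.mul_apply, Fin.sum_univ_two, Matrix.single]

lemma trB (M : Matrix (Fin 2) (Fin 2) ℂ) :
    (M * Matrix.of fun _ _ => (1/2:ℂ)).trace
      = (((1:ℝ)/2 : ℝ):ℂ) * (M 0 0 + M 0 1 + M 1 0 + M 1 1) := by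
  simp [Matrix.trace_fin_two, Matrix.mul_apply, Fin.sum_univ_two, Matrix.of_apply]
  push_cast
  ring

lemma perr_pos : 0 < Perr (fun _ : Fin 7 => (1 / 7 : ℝ)) qubitEx := by
  have hid : ((7:ℂ)⁻¹ • (1 : Matrix (Fin 2) (Fin 2) ℂ)).PosSemidef := by
    rw [show ((7:ℂ)⁻¹ • (1 : Matrix (Fin 2) (Fin 2) ℂ))
        = Matrix.diagonal (fun _ => (((7:ℝ)⁻¹ : ℝ):ℂ)) by
      ext i j; by_cases h : i = j <;> simp [h, Matrix.diagonal, Matrix.one_apply] <;> norm_num]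
    exact Matrix.PosSemidef.diagonal (fun i => Complex.zero_le_real.mpr (by norm_num))
  have hne : {e : ℝ | ∃ Λ : Fin 7 → Matrix (Fin 2) (Fin 2) ℂ,
      (∀ x, (Λ x).PosSemidef) ∧ (∑ x, Λ x = 1) ∧
      e = ∑ x, (fun _ : Fin 7 => (1 / 7 : ℝ)) x * (((Λ x) * (qubitEx x)).trace).re}.Nonempty := by
    refine ⟨_, fun _ => (7:ℂ)⁻¹ • 1, fun _ => hid, ?_, rfl⟩
    rw [Finset.sum_const, Finset.card_univ]
    simp only [Fintype.card_fin, ← Nat.cast_smul_eq_nsmul ℂ, smul_smul]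
    norm_num
  have hbd : ∀ e ∈ {e : ℝ | ∃ Λ : Fin 7 → Matrix (Fin 2) (Fin 2) ℂ,
      (∀ x, (Λ x).PosSemidef) ∧ (∑ x, Λ x = 1) ∧
      e = ∑ x, (fun _ : Fin 7 => (1 / 7 : ℝ)) x * (((Λ x) * (qubitEx x)).trace).re},
      (1/28 : ℝ) ≤ e := by
    rintro e ⟨Λ, hpsd, hsum, rfl⟩
    have hq : ∀ x : Fin 7, ((Λ x) * (qubitEx x)).trace
        = if (x:ℕ) < 3 then Λ x 0 0
          else (((1:ℝ)/2 : ℝ):ℂ) * (Λ x 0 0 + Λ x 0 1 + Λ x 1 0 + Λ x 1 1) := by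
      intro x
      by_cases h : (x:ℕ) < 3 <;> simp only [qubitEx, h, if_true, if_false, trA, trB]
    have hsumij : ∀ i j : Fin 2, ∑ x : Fin 7, (Λ x i j).re
        = ((1 : Matrix (Fin 2) (Fin 2) ℂ) i j).re := by
      intro i j
      rw [← Complex.re_sum]
      congr 1
      have := congrFun (congrFun hsum i) j
      simpa [Matrix.sum_apply] using this
    have h00 := hsumij 0 0; have h01 := hsumij 0 1
    have h10 := hsumij 1 0; have h11 := hsumij 1 1
    rw [Fin.sum_univ_seven] at h00 h01 h10 h11
    simp only [Matrix.one_apply, if_true, if_false] at h00 h01 h10 h11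
    norm_num at h00 h01 h10 h11
    have f0 := form_re (Λ 0) (hpsd 0) 2 (-1)
    have f1 := form_re (Λ 1) (hpsd 1) 2 (-1)
    have f2 := form_re (Λ 2) (hpsd 2) 2 (-1)
    have g0 := form_re (Λ 0) (hpsd 0) 1 0
    have g1 := form_re (Λ 1) (hpsd 1) 1 0
    have g2 := form_re (Λ 2) (hpsd 2) 1 0
    have f3 := form_re (Λ 3) (hpsd 3) 1 2
    have f4 := form_re (Λ 4) (hpsd 4) 1 2
    have f5 := form_re (Λ 5) (hpsd 5) 1 2
    have f6 := form_re (Λ 6) (hpsd 6) 1 2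
    rw [Fin.sum_univ_seven]
    simp only [hq, show ((0:Fin 7):ℕ) = 0 from rfl, show ((1:Fin 7):ℕ) = 1 from rfl,
      show ((2:Fin 7):ℕ) = 2 from rfl, show ((3:Fin 7):ℕ) = 3 from rfl,
      show ((4:Fin 7):ℕ) = 4 from rfl, show ((5:Fin 7):ℕ) = 5 from rfl,
      show ((6:Fin 7):ℕ) = 6 from rfl]
    norm_num [Complex.re_ofReal_mul, Complex.add_re]
    linarith
  have : (1/28 : ℝ) ≤ Perr (fun _ : Fin 7 => (1 / 7 : ℝ)) qubitEx := le_csInf hne hbd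
  linarith

/-- for the ensemble `qubitEx`, the infimum of the
hypothesis-testing divergence over density operators is `+∞` while `−ln P_err`
is finite; hence the infimum must run over unit-trace Hermitian operators. -/
theorem hypothesis_testing_infimum_needs_affine :
    (⨅ τ ∈ {τ : Matrix (Fin 2) (Fin 2) ℂ | IsState τ},
        DH (1 - 1 / 7)
          ((((7 : ℂ))⁻¹ • (1 : Matrix (Fin 7) (Fin 7) ℂ)) ⊗ₖ τ)
          (∑ x, Matrix.single x x ((1 / 7 : ℂ)) ⊗ₖ qubitEx x)) = ⊤ ∧
      0 < Perr (fun _ : Fin 7 => (1 / 7 : ℝ)) qubitEx := by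
  constructor
  · refine iInf_eq_top.mpr fun τ => iInf_eq_top.mpr fun hτ => ?_
    obtain ⟨hpsd, htr⟩ := hτ
    rw [DH, eq_top_iff]
    have hmem : bd Qs ∈ {Λ : Matrix (Fin 7 × Fin 2) (Fin 7 × Fin 2) ℂ |
        Λ.PosSemidef ∧ (1 - Λ).PosSemidef ∧
        1 - (1 - 1/7) ≤ (((Λ * ((((7 : ℂ))⁻¹ • (1 : Matrix (Fin 7) (Fin 7) ℂ)) ⊗ₖ τ)).trace)).re} := by
      refine ⟨bd_psd _ Qs_psd, ?_, ?_⟩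
      · rw [bd_one, bd_sub]
        exact bd_psd _ (fun x => by simpa using Qs_compl_psd x)
      · have h := overlap τ hpsd htr
        have h17 : (1:ℝ) - (1 - 1/7) = 1/7 := by norm_num
        rw [h17]
        exact h
    refine le_iSup₂_of_le (bd Qs) hmem ?_
    rw [trace_zero]
    simp [negLogE]
  · exact perr_pos


end QHE
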